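/- (AWBGA Error Reduction Lemma) Let X be a uniformly smooth Banach space with modulus of smoothness ρ. Let f, f^ε ∈ X with ‖f − f^ε‖ ≤ ε and f^ε/A ∈ A_1(D), A ≥ ε. Suppose f = f_m + G_m with f_m ≠ 0, and F_m ∈ X' satisfies ‖F_m‖ ≤ 1, F_m(f_m) ≥ (1−δ_m)‖f_m‖, |F_m(G_m)| ≤ ε_m, and φ_{m+1} ∈ D satisfies F_m(φ_{m+1}) ≥ t_{m+1} sup_{g∈D} F_m(g), and ‖f_{m+1}‖ ≤ (1+η_{m+1}) inf_{λ≥0}‖f_m − λφ_{m+1}‖. Then for every λ ≥ 0: ‖f_{m+1}‖ ≤ ‖f_m‖(1+η_{m+1})(1 + δ_m + 2ρ(λ/‖f_m‖) − λ t_{m+1} A^{−1}(1 − δ_m − (ε_m + ε)/‖f_m‖)). -/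

import Mathlib

/-!
Normalising `x` to the unit vector `x / ‖x‖`, the definition of the modulus of smoothness gives
`‖x + l y‖ + ‖x - l y‖ ≤ 2‖x‖(1 + ρ(l/‖x‖))` for `‖y‖ ≤ 1`. Testing `x + l y` against a norm-one
functional `F` then bounds `‖x - l y‖` by `2‖x‖(1 + ρ) - F x - l F y`. For `x = f_m`, `y = φ_{m+1}`
the term `F f_m` is at least `(1 - δ_m)‖f_m‖`, and `F φ_{m+1}` is bounded below through the greedy
condition: `F` is dominated by `sup_D F` on the closed convex hull of `D`, which contains `f^ε / A`,
and `F f^ε ≥ F f_m + F G_m - ε`.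
-/

/-- The modulus of smoothness of a real normed space. -/
noncomputable def modulusOfSmoothness (X : Type*) [NormedAddCommGroup X] [NormedSpace ℝ X]
    (u : ℝ) : ℝ :=
  sSup { r : ℝ | ∃ x y : X, ‖x‖ = 1 ∧ ‖y‖ = 1 ∧ r = (‖x + u • y‖ + ‖x - u • y‖) / 2 - 1 }

/-- `X` is uniformly smooth: `ρ(u)/u → 0` as `u → 0⁺`. -/
def UniformlySmooth (X : Type*) [NormedAddCommGroup X] [NormedSpace ℝ X] : Prop :=
  Filter.Tendsto (fun u : ℝ => modulusOfSmoothness X u / u)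
    (nhdsWithin 0 (Set.Ioi 0)) (nhds 0)

theorem ContinuousLinearMap.apply_le_of_mem_closure_convexHull {E : Type*} [AddCommGroup E]
    [Module ℝ E] [TopologicalSpace E] (F : E →L[ℝ] ℝ) {D : Set E} {c : ℝ}
    (hc : ∀ g ∈ D, F g ≤ c) {z : E} (hz : z ∈ closure (convexHull ℝ D)) : F z ≤ c :=
  closure_minimal (convexHull_min hc (convex_halfSpace_le F.toLinearMap.isLinear c))
    (isClosed_le F.continuous continuous_const) hz

theorem ContinuousLinearMap.apply_le_norm_of_opNorm_le_one {E : Type*}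
    [SeminormedAddCommGroup E] [NormedSpace ℝ E] {F : E →L[ℝ] ℝ} (hF : ‖F‖ ≤ 1) (z : E) :
    F z ≤ ‖z‖ :=
  (le_abs_self _).trans ((F.le_of_opNorm_le hF z).trans_eq (one_mul _))

section Smoothness

variable {X : Type*} [NormedAddCommGroup X] [NormedSpace ℝ X]

theorem le_modulusOfSmoothness {x y : X} (hx : ‖x‖ = 1) (hy : ‖y‖ = 1) (u : ℝ) :
    (‖x + u • y‖ + ‖x - u • y‖) / 2 - 1 ≤ modulusOfSmoothness X u := by
  refine le_csSup ⟨|u|, ?_⟩ ⟨x, y, hx, hy, rfl⟩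
  rintro r ⟨x, y, hx, hy, rfl⟩
  have hadd := norm_add_le x (u • y)
  have hsub := norm_sub_le x (u • y)
  rw [norm_smul, hx, hy, Real.norm_eq_abs, mul_one] at hadd hsub
  linarith

theorem modulusOfSmoothness_nonneg {x : X} (hx : ‖x‖ = 1) (u : ℝ) :
    0 ≤ modulusOfSmoothness X u := by
  have hρ := le_modulusOfSmoothness hx hx u
  have h2x : (2 : ℝ) ≤ ‖x + u • x‖ + ‖x - u • x‖ := by
    calc (2 : ℝ) = ‖(x + u • x) + (x - u • x)‖ := by
          rw [show (x + u • x) + (x - u • x) = (2 : ℝ) • x by module, norm_smul, hx]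
          norm_num
      _ ≤ _ := norm_add_le _ _
  linarith

/-- The supremum defining `ρ` runs over unit vectors only; a shorter `y` is handled by writing
`x ± u y` as a convex combination of `x` and `x ± u (y / ‖y‖)`. -/
theorem norm_add_add_norm_sub_le_of_norm_eq_one {x y : X} (hx : ‖x‖ = 1) (hy : ‖y‖ ≤ 1)
    (u : ℝ) : ‖x + u • y‖ + ‖x - u • y‖ ≤ 2 * (1 + modulusOfSmoothness X u) := by
  have hρ := modulusOfSmoothness_nonneg hx u
  rcases eq_or_ne y 0 with rfl | hy0
  · simp only [smul_zero, add_zero, sub_zero, hx]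
    linarith
  set s := ‖y‖
  have hs : 0 < s := norm_pos_iff.2 hy0
  set e := s⁻¹ • y
  have he : ‖e‖ = 1 := by
    rw [norm_smul, norm_inv, Real.norm_of_nonneg hs.le]
    exact inv_mul_cancel₀ hs.ne'
  have hse : s • e = y := smul_inv_smul₀ hs.ne' y
  have hconv : ∀ z : X, ‖x + s • z‖ ≤ (1 - s) + s * ‖x + z‖ := fun z => by
    calc ‖x + s • z‖ = ‖(1 - s) • x + s • (x + z)‖ := by congr 1; module
      _ ≤ ‖(1 - s) • x‖ + ‖s • (x + z)‖ := norm_add_le _ _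
      _ = (1 - s) + s * ‖x + z‖ := by
        rw [norm_smul, norm_smul, hx, Real.norm_of_nonneg (by linarith),
          Real.norm_of_nonneg hs.le, mul_one]
  have hadd := hconv (u • e)
  have hsub := hconv (-(u • e))
  rw [smul_comm, hse] at hadd
  rw [smul_neg, smul_comm, hse, ← sub_eq_add_neg, ← sub_eq_add_neg] at hsub
  have hρe := le_modulusOfSmoothness hx he u
  nlinarith

theorem norm_add_add_norm_sub_le {x y : X} (hx : x ≠ 0) (hy : ‖y‖ ≤ 1) (l : ℝ) :
    ‖x + l • y‖ + ‖x - l • y‖ ≤ 2 * ‖x‖ * (1 + modulusOfSmoothness X (l / ‖x‖)) := by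
  have hN : 0 < ‖x‖ := norm_pos_iff.2 hx
  have hunit : ‖‖x‖⁻¹ • x‖ = 1 := by
    rw [norm_smul, norm_inv, norm_norm, inv_mul_cancel₀ hN.ne']
  have hscale : ∀ v : X, ‖x‖ • (‖x‖⁻¹ • x + v) = x + ‖x‖ • v := fun v => by
    rw [smul_add, smul_inv_smul₀ hN.ne']
  have hsum := norm_add_add_norm_sub_le_of_norm_eq_one hunit hy (l / ‖x‖)
  have hadd := congrArg norm (hscale ((l / ‖x‖) • y))
  have hsub := congrArg norm (hscale (-((l / ‖x‖) • y)))
  rw [smul_smul, mul_div_cancel₀ _ hN.ne', norm_smul, norm_norm] at hadd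
  rw [smul_neg, smul_smul, mul_div_cancel₀ _ hN.ne', norm_smul, norm_norm, ← sub_eq_add_neg,
    ← sub_eq_add_neg] at hsub
  nlinarith

theorem norm_sub_smul_le {F : X →L[ℝ] ℝ} (hF : ‖F‖ ≤ 1) {x y : X} (hx : x ≠ 0) (hy : ‖y‖ ≤ 1)
    (l : ℝ) :
    ‖x - l • y‖ ≤ 2 * ‖x‖ * (1 + modulusOfSmoothness X (l / ‖x‖)) - F x - l * F y := by
  have hFadd := F.apply_le_norm_of_opNorm_le_one hF (x + l • y)
  rw [map_add, map_smul, smul_eq_mul] at hFadd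
  linarith [norm_add_add_norm_sub_le hx hy l]

end Smoothness

theorem stmt_13_general {X : Type*} [NormedAddCommGroup X] [NormedSpace ℝ X]
    (D : Set X) (hnorm : ∀ g ∈ D, ‖g‖ ≤ 1)
    (ε A : ℝ) (hA0 : 0 < A)
    (f fε : X) (hfε : ‖f - fε‖ ≤ ε) (hfA : A⁻¹ • fε ∈ closure (convexHull ℝ D))
    (fm Gm : X) (hsum : f = fm + Gm) (hfm : fm ≠ 0)
    (δ η εm t : ℝ) (hη : η ∈ Set.Icc (0:ℝ) 1)
    (ht : t ∈ Set.Ioc (0:ℝ) 1)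
    (F : X →L[ℝ] ℝ) (hF1 : ‖F‖ ≤ 1) (hFfm : F fm ≥ (1 - δ) * ‖fm‖)
    (hbo : |F Gm| ≤ εm)
    (φ : X) (hφD : φ ∈ D) (hgreedy : F φ ≥ t * sSup (F '' D))
    (fnext : X)
    (hred : ‖fnext‖ ≤ (1 + η) * ⨅ l : {x : ℝ // 0 ≤ x}, ‖fm - (l : ℝ) • φ‖) :
    ∀ l : ℝ, 0 ≤ l →
      ‖fnext‖ ≤ ‖fm‖ * (1 + η) *
        (1 + δ + 2 * modulusOfSmoothness X (l / ‖fm‖)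
          - l * t * A⁻¹ * (1 - δ - (εm + ε) / ‖fm‖)) := by
  intro l hl
  have hFle := F.apply_le_norm_of_opNorm_le_one hF1
  have hbdd : BddAbove (F '' D) := ⟨1, by rintro _ ⟨g, hg, rfl⟩; exact (hFle g).trans (hnorm g hg)⟩
  have hsup : A⁻¹ * F fε ≤ sSup (F '' D) := by
    simpa using F.apply_le_of_mem_closure_convexHull (fun g hg => le_csSup hbdd ⟨g, hg, rfl⟩) hfA
  have hFfε : (1 - δ) * ‖fm‖ - εm - ε ≤ F fε := by
    have := hFle (f - fε)
    rw [hsum, map_sub, map_add] at this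
    linarith [neg_abs_le (F Gm), hsum ▸ hfε]
  have hFφ : t * A⁻¹ * ((1 - δ) * ‖fm‖ - εm - ε) ≤ F φ := by
    have := mul_le_mul_of_nonneg_left hFfε (inv_nonneg.2 hA0.le)
    have := mul_le_mul_of_nonneg_left (this.trans hsup) ht.1.le
    linarith
  have hinf : ⨅ l : {x : ℝ // 0 ≤ x}, ‖fm - (l : ℝ) • φ‖ ≤ ‖fm - l • φ‖ :=
    ciInf_le ⟨0, by rintro _ ⟨_, rfl⟩; exact norm_nonneg _⟩ (⟨l, hl⟩ : {x : ℝ // 0 ≤ x})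
  have hnext : ‖fnext‖ ≤ (1 + η) * ‖fm - l • φ‖ :=
    hred.trans (mul_le_mul_of_nonneg_left hinf (by linarith [hη.1]))
  have hstep := norm_sub_smul_le hF1 hfm (hnorm φ hφD) l
  have hrhs : ‖fm‖ * (1 + δ + 2 * modulusOfSmoothness X (l / ‖fm‖)
      - l * t * A⁻¹ * (1 - δ - (εm + ε) / ‖fm‖)) = 2 * ‖fm‖ * (1 + modulusOfSmoothness X (l / ‖fm‖))
      - (1 - δ) * ‖fm‖ - l * (t * A⁻¹ * ((1 - δ) * ‖fm‖ - εm - ε)) := by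
    field_simp [norm_ne_zero_iff.2 hfm]
    ring
  calc ‖fnext‖ ≤ (1 + η) * ‖fm - l • φ‖ := hnext
    _ ≤ (1 + η) * (‖fm‖ * (1 + δ + 2 * modulusOfSmoothness X (l / ‖fm‖)
          - l * t * A⁻¹ * (1 - δ - (εm + ε) / ‖fm‖))) := by
      gcongr
      · linarith [hη.1]
      · rw [hrhs]; linarith [mul_le_mul_of_nonneg_left hFφ hl]
    _ = _ := by ring

/-- AWBGA Error Reduction Lemma. -/
theorem stmt_13 {X : Type*} [NormedAddCommGroup X] [NormedSpace ℝ X] [CompleteSpace X]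
    (hsm : UniformlySmooth X)
    (D : Set X) (hsymm : ∀ g ∈ D, -g ∈ D) (hnorm : ∀ g ∈ D, ‖g‖ ≤ 1)
    (hdense : (Submodule.span ℝ D).topologicalClosure = ⊤)
    (ε A : ℝ) (hε : 0 ≤ ε) (hA : ε ≤ A) (hA0 : 0 < A)
    (f fε : X) (hfε : ‖f - fε‖ ≤ ε) (hfA : A⁻¹ • fε ∈ closure (convexHull ℝ D))
    (fm Gm : X) (hsum : f = fm + Gm) (hfm : fm ≠ 0)
    (δ η εm t : ℝ) (hδ : δ ∈ Set.Icc (0:ℝ) 1) (hη : η ∈ Set.Icc (0:ℝ) 1)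
    (hεm : 0 ≤ εm) (ht : t ∈ Set.Ioc (0:ℝ) 1)
    (F : X →L[ℝ] ℝ) (hF1 : ‖F‖ ≤ 1) (hFfm : F fm ≥ (1 - δ) * ‖fm‖)
    (hbo : |F Gm| ≤ εm)
    (φ : X) (hφD : φ ∈ D) (hgreedy : F φ ≥ t * sSup (F '' D))
    (fnext : X)
    (hred : ‖fnext‖ ≤ (1 + η) * ⨅ l : {x : ℝ // 0 ≤ x}, ‖fm - (l : ℝ) • φ‖) :
    ∀ l : ℝ, 0 ≤ l →
      ‖fnext‖ ≤ ‖fm‖ * (1 + η) *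
        (1 + δ + 2 * modulusOfSmoothness X (l / ‖fm‖)
          - l * t * A⁻¹ * (1 - δ - (εm + ε) / ‖fm‖)) :=
  stmt_13_general D hnorm ε A hA0 f fε hfε hfA fm Gm hsum hfm δ η εm t hη ht F hF1 hFfm hbo φ hφD
    hgreedy fnext hred
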